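/- Under the alternating-sublattice zero-temperature majority dynamics on the hexagonal lattice, if at some time a barbell (two disjoint simple cycles connected by a path, or a single simple cycle) has constant spin sign, then every site of the barbell retains that sign at all later times. -/

import Mathlib

open MeasureTheory

/-- Vertices of the hexagonal (honeycomb) lattice: two sites per unit cell of `ℤ × ℤ`. -/
abbrev Hex := ℤ × ℤ × Bool

/-- Base adjacency relation generating the hexagonal lattice: the `A`-site (`false`) of cell
`(i,j)` is adjacent to the `B`-sites (`true`) of cells `(i,j)`, `(i-1,j)`, `(i,j-1)`. -/
def hexRel (u v : Hex) : Prop :=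
  u.2.2 = false ∧ v.2.2 = true ∧
    ((v.1, v.2.1) = (u.1, u.2.1) ∨ (v.1, v.2.1) = (u.1 - 1, u.2.1) ∨
      (v.1, v.2.1) = (u.1, u.2.1 - 1))

/-- The hexagonal lattice as a simple graph; every vertex has degree 3. -/
def HexGraph : SimpleGraph Hex := SimpleGraph.fromRel hexRel

/-- Membership in the sublattice `A`. -/
def isA (v : Hex) : Prop := v.2.2 = false

/-- Membership in the sublattice `B`. -/
def isB (v : Hex) : Prop := v.2.2 = true

/-- Adjacency of two `B`-sites (graph distance 2 in `H`, via a common `A`-neighbor);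
this makes `B` a triangular lattice. -/
def Badj (y y' : Hex) : Prop :=
  isB y ∧ isB y' ∧ y ≠ y' ∧ ∃ z, isA z ∧ HexGraph.Adj y z ∧ HexGraph.Adj z y'

/-- The triangular lattice as a graph on `ℤ × ℤ` (each vertex has 6 neighbors). -/
def triRel (u v : ℤ × ℤ) : Prop :=
  (v.1 - u.1, v.2 - u.2) ∈ ({(1, 0), (0, 1), (1, -1)} : Set (ℤ × ℤ))

def TriGraph : SimpleGraph (ℤ × ℤ) := SimpleGraph.fromRel triRel

/-- The three `H`-neighbors of a hexagonal-lattice site. -/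
def nbrsT : Hex → Hex × Hex × Hex
  | (i, j, true) => ((i, j, false), (i + 1, j, false), (i, j + 1, false))
  | (i, j, false) => ((i, j, true), (i - 1, j, true), (i, j - 1, true))

/-- The majority of the spins of the three neighbors of `x`; a spin flips iff it disagrees
with at least two of its three neighbors, i.e. the updated value is this majority. -/
def majAt (σ : Hex → Bool) (x : Hex) : Bool :=
  let n := nbrsT x
  (σ n.1 && σ n.2.1) || (σ n.1 && σ n.2.2) || (σ n.2.1 && σ n.2.2)

/-- Update of the sublattice `A`. -/
def updA (σ : Hex → Bool) : Hex → Bool := fun x =>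
  if x.2.2 = false then majAt σ x else σ x

/-- Update of the sublattice `B`. -/
def updB (σ : Hex → Bool) : Hex → Bool := fun x =>
  if x.2.2 = true then majAt σ x else σ x

/-- The zero-temperature alternating-sublattice majority dynamics: `A` is updated at odd
times, `B` at even times. -/
def evolve (σ0 : Hex → Bool) : ℕ → Hex → Bool
  | 0 => σ0
  | n + 1 => if (n + 1) % 2 = 1 then updA (evolve σ0 n) else updB (evolve σ0 n)

/-- `z` is the common `A`-neighbor linking the (B-adjacent) pair `p`. -/
def IsLink (p : Hex × Hex) (z : Hex) : Prop :=
  isA z ∧ HexGraph.Adj p.1 z ∧ HexGraph.Adj z p.2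

/-- A (site-self-avoiding) path in the triangular sublattice `B`. -/
def IsPathB (l : List Hex) : Prop :=
  (∀ y ∈ l, isB y) ∧ l.Chain' Badj ∧ l.Nodup

/-- An s-path: a path in `B` whose consecutive-pair common `A`-neighbors are all distinct. -/
def IsSPath (l : List Hex) : Prop :=
  IsPathB l ∧ ∃ zs : List Hex, List.Forall₂ IsLink (l.zip l.tail) zs ∧ zs.Nodup

/-- A simple loop in the triangular sublattice `B`, recorded by its (distinct) sites. -/
def IsLoopB (l : List Hex) : Prop :=
  (∀ y ∈ l, isB y) ∧ l.Nodup ∧ 3 ≤ l.length ∧ (l ++ l.take 1).Chain' Badj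

/-- An s-loop: a loop in `B` whose consecutive-pair common `A`-neighbors are all distinct. -/
def IsSLoop (l : List Hex) : Prop :=
  IsLoopB l ∧ ∃ zs : List Hex,
    List.Forall₂ IsLink ((l ++ l.take 1).zip (l ++ l.take 1).tail) zs ∧ zs.Nodup

/-- A star: a triangle in `B` whose three sites have a common `A`-neighbor. -/
def IsStar (a b c : Hex) : Prop :=
  Badj a b ∧ Badj b c ∧ Badj c a ∧
    ∃ z, isA z ∧ HexGraph.Adj a z ∧ HexGraph.Adj b z ∧ HexGraph.Adj c z

/-- An antistar: a triangle in `B` whose three sites have no common `A`-neighbor. -/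
def IsAntistarSet (t : Finset Hex) : Prop :=
  ∃ a b c : Hex, t = {a, b, c} ∧ Badj a b ∧ Badj b c ∧ Badj c a ∧
    ¬ ∃ z, isA z ∧ HexGraph.Adj a z ∧ HexGraph.Adj b z ∧ HexGraph.Adj c z

/-- The partial cluster `C_{(x,x')}`: sites of `B` reachable from `x'` by a self-avoiding
path of constant `σ`-sign whose first step avoids `x` and does not form a star with `x`. -/
def partialCluster (σ : Hex → Bool) (x x' : Hex) : Set Hex :=
  {y | ∃ l : List Hex, IsPathB l ∧ (∀ w ∈ l, σ w = σ x') ∧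
        l.head? = some x' ∧ l.getLast? = some y ∧
        ∀ h : 1 < l.length, l.get ⟨1, h⟩ ≠ x ∧ ¬ IsStar x' (l.get ⟨1, h⟩) x}

/-- The open cluster of `x0` (for `σ`-open sites) in the triangular sublattice `B`. -/
def openCluster (σ : Hex → Bool) (x0 : Hex) : Set Hex :=
  {y | ∃ l : List Hex, IsPathB l ∧ (∀ w ∈ l, σ w = true) ∧
        l.head? = some x0 ∧ l.getLast? = some y}

/-- A barbell: two vertex-disjoint simple cycles connected by a path (a single simple cycle
being a degenerate barbell), recorded as its set of sites. -/
def IsBarbell (S : Set Hex) : Prop :=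
  (∃ (u : Hex) (c : HexGraph.Walk u u), c.IsCycle ∧ S = {x | x ∈ c.support}) ∨
  (∃ (u v w1 w2 : Hex) (c1 : HexGraph.Walk u u) (c2 : HexGraph.Walk v v)
      (p : HexGraph.Walk w1 w2), c1.IsCycle ∧ c2.IsCycle ∧
      Disjoint {x | x ∈ c1.support} {x | x ∈ c2.support} ∧ p.IsPath ∧
      w1 ∈ c1.support ∧ w2 ∈ c2.support ∧
      S = {x | x ∈ c1.support} ∪ {x | x ∈ c2.support} ∪ {x | x ∈ p.support})

/-- Standard planar embedding of the triangular lattice (unit mesh). -/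
noncomputable def embT (p : ℤ × ℤ) : ℝ × ℝ :=
  ((p.1 : ℝ) + (p.2 : ℝ) / 2, (p.2 : ℝ) * Real.sqrt 3 / 2)

/-- Planar embedding of the hexagonal lattice: `B`-sites at triangular-lattice points,
`A`-sites at the centroids of their three `B`-neighbors. -/
noncomputable def embH (v : Hex) : ℝ × ℝ :=
  if v.2.2 then embT (v.1, v.2.1)
  else (((embT (v.1, v.2.1)).1 + (embT (v.1 - 1, v.2.1)).1 + (embT (v.1, v.2.1 - 1)).1) / 3,
        ((embT (v.1, v.2.1)).2 + (embT (v.1 - 1, v.2.1)).2 + (embT (v.1, v.2.1 - 1)).2) / 3)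

/-- The open rectangle `(-a/2, a/2) × (-b/2, b/2)`. -/
def rectR (a b : ℝ) : Set (ℝ × ℝ) := Set.Ioo (-a / 2) (a / 2) ×ˢ Set.Ioo (-b / 2) (b / 2)

def topSide (a b : ℝ) : Set (ℝ × ℝ) := Set.Icc (-a / 2) (a / 2) ×ˢ ({b / 2} : Set ℝ)
def bottomSide (a b : ℝ) : Set (ℝ × ℝ) := Set.Icc (-a / 2) (a / 2) ×ˢ ({-b / 2} : Set ℝ)
def leftSide (a b : ℝ) : Set (ℝ × ℝ) := ({-a / 2} : Set ℝ) ×ˢ Set.Icc (-b / 2) (b / 2)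
def rightSide (a b : ℝ) : Set (ℝ × ℝ) := ({a / 2} : Set ℝ) ×ˢ Set.Icc (-b / 2) (b / 2)

/-- A lattice crossing of a region, following the paper: a path `x_0, …, x_{m+1}` of good
sites, with `δ x_1, …, δ x_m` inside the region, the segment from `δ x_0` to `δ x_1`
touching the starting side and the segment from `δ x_m` to `δ x_{m+1}` touching the
ending side. -/
def LatticeCrossing {α : Type*} (Adj : α → α → Prop) (good : α → Prop) (e : α → ℝ × ℝ)
    (δ : ℝ) (inside startSide endSide : Set (ℝ × ℝ)) : Prop :=
  ∃ (m : ℕ) (f : ℕ → α), 1 ≤ m ∧ (∀ i ≤ m, Adj (f i) (f (i + 1))) ∧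
    (∀ i ≤ m + 1, good (f i)) ∧
    (∀ i, 1 ≤ i → i ≤ m → δ • e (f i) ∈ inside) ∧
    (segment ℝ (δ • e (f 0)) (δ • e (f 1)) ∩ startSide).Nonempty ∧
    (segment ℝ (δ • e (f m)) (δ • e (f (m + 1))) ∩ endSide).Nonempty

/-- Vertical plus-crossing of the rectangle `R(a,b)` in the mesh-`δ` hexagonal lattice. -/
def VPlusCrossHex (σ : Hex → Bool) (δ a b : ℝ) : Prop :=
  LatticeCrossing HexGraph.Adj (fun v => σ v = true) embH δ (rectR a b) (topSide a b)
    (bottomSide a b)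

/-- Horizontal minus-crossing of `R(a,b)` in the mesh-`δ` hexagonal lattice. -/
def HMinusCrossHex (σ : Hex → Bool) (δ a b : ℝ) : Prop :=
  LatticeCrossing HexGraph.Adj (fun v => σ v = false) embH δ (rectR a b) (leftSide a b)
    (rightSide a b)

/-- Horizontal minus-crossing of `R(a,b)` in the mesh-`δ` triangular sublattice `B`. -/
def HMinusCrossB (σ : Hex → Bool) (δ a b : ℝ) : Prop :=
  LatticeCrossing Badj (fun v => σ v = false) embH δ (rectR a b) (leftSide a b)
    (rightSide a b)

/-- Vertical plus-crossing of `R(a,b)` in the mesh-`δ` sublattice `B` realized by an s-path. -/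
def SPathVPlusCrossB (σ : Hex → Bool) (δ a b : ℝ) : Prop :=
  ∃ (m : ℕ) (f : ℕ → Hex), 1 ≤ m ∧
    IsSPath (List.ofFn fun i : Fin (m + 2) => f i) ∧
    (∀ i ≤ m + 1, σ (f i) = true) ∧
    (∀ i, 1 ≤ i → i ≤ m → δ • embH (f i) ∈ rectR a b) ∧
    (segment ℝ (δ • embH (f 0)) (δ • embH (f 1)) ∩ topSide a b).Nonempty ∧
    (segment ℝ (δ • embH (f m)) (δ • embH (f (m + 1))) ∩ bottomSide a b).Nonempty

/-- The six triangular-lattice neighbors of a site. -/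
def triNbrs (p : ℤ × ℤ) : List (ℤ × ℤ) :=
  [(p.1 + 1, p.2), (p.1 - 1, p.2), (p.1, p.2 + 1), (p.1, p.2 - 1),
    (p.1 + 1, p.2 - 1), (p.1 - 1, p.2 + 1)]

/-- One step of the deterministic cellular automaton on the triangular lattice: the spin
at `p` flips iff at least two of its three designated neighbor-pairs are monochromatic
of the opposite sign. -/
def autoStep (τ : ℤ × ℤ → Bool) (p : ℤ × ℤ) : Bool :=
  let v := τ p
  let q1 := (τ (p.1 - 1, p.2) == !v) && (τ (p.1, p.2 - 1) == !v)
  let q2 := (τ (p.1 + 1, p.2) == !v) && (τ (p.1 + 1, p.2 - 1) == !v)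
  let q3 := (τ (p.1 - 1, p.2 + 1) == !v) && (τ (p.1, p.2 + 1) == !v)
  cond ((q1 && q2) || (q1 && q3) || (q2 && q3)) (!v) v

/-- The automaton dynamics on the triangular lattice. -/
def autoEvolve (τ0 : ℤ × ℤ → Bool) : ℕ → ℤ × ℤ → Bool
  | 0 => τ0
  | m + 1 => autoStep (autoEvolve τ0 m)

/-- The Gauss hypergeometric function `₂F₁`, as a power series. -/
noncomputable def hyp2F1 (a b c x : ℝ) : ℝ :=
  ∑' n : ℕ, ((ascPochhammer ℝ n).eval a * (ascPochhammer ℝ n).eval b /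
    (ascPochhammer ℝ n).eval c) * x ^ n / (n.factorial : ℝ)

/-- Cardy's formula `F_C(η)`. -/
noncomputable def cardyF (η : ℝ) : ℝ :=
  (Real.Gamma (2 / 3) / (Real.Gamma (4 / 3) * Real.Gamma (1 / 3))) * η ^ ((1 : ℝ) / 3) *
    hyp2F1 (1 / 3) (2 / 3) (4 / 3) η

/-!
A site agreeing with two of its three neighbours is a majority site, so the update keeps its
sign. In a barbell every site has two distinct neighbours inside the barbell: its two cycle
neighbours, or its two path neighbours when it is an interior vertex of the connecting path.
Hence a monochromatic barbell is preserved by each half-step, and by induction at all later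
times.
-/

namespace SimpleGraph

variable {V : Type*} {G : SimpleGraph V}

def MinDegreeTwoOn (G : SimpleGraph V) (S : Set V) : Prop :=
  ∀ x ∈ S, (G.neighborSet x ∩ S).Nontrivial

namespace Walk

theorem neighborSet_toSubgraph_subset {u v : V} (p : G.Walk u v) (x : V) :
    p.toSubgraph.neighborSet x ⊆ G.neighborSet x ∩ {y | y ∈ p.support} :=
  fun _ hy => ⟨hy.adj_sub, p.mem_verts_toSubgraph.mp hy.snd_mem⟩

theorem nontrivial_neighborSet_inter_support_of_ncard_eq_two {u v x : V} (p : G.Walk u v)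
    (h : (p.toSubgraph.neighborSet x).ncard = 2) :
    (G.neighborSet x ∩ {y | y ∈ p.support}).Nontrivial :=
  (Set.one_lt_ncard_iff_nontrivial_and_finite.mp (by omega)).1.mono
    (p.neighborSet_toSubgraph_subset x)

theorem IsCycle.minDegreeTwoOn_support {u : V} {c : G.Walk u u} (hc : c.IsCycle) :
    G.MinDegreeTwoOn {x | x ∈ c.support} :=
  fun _ hx => c.nontrivial_neighborSet_inter_support_of_ncard_eq_two
    (hc.ncard_neighborSet_toSubgraph_eq_two hx)

theorem IsPath.nontrivial_neighborSet_inter_support {u v x : V} {p : G.Walk u v}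
    (hp : p.IsPath) (hx : x ∈ p.support) (hu : x ≠ u) (hv : x ≠ v) :
    (G.neighborSet x ∩ {y | y ∈ p.support}).Nontrivial := by
  obtain ⟨i, rfl, hi⟩ := mem_support_iff_exists_getVert.mp hx
  have hi0 : i ≠ 0 := by rintro rfl; exact hu p.getVert_zero
  have hil : i ≠ p.length := by rintro rfl; exact hv p.getVert_length
  exact p.nontrivial_neighborSet_inter_support_of_ncard_eq_two
    (hp.ncard_neighborSet_toSubgraph_internal_eq_two hi0 (by omega))

end Walk

end SimpleGraph

theorem IsBarbell.minDegreeTwoOn {S : Set Hex} (hS : IsBarbell S) :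
    HexGraph.MinDegreeTwoOn S := by
  rcases hS with ⟨u, c, hc, rfl⟩ | ⟨u, v, w1, w2, c1, c2, p, hc1, hc2, -, hp, hw1, hw2, rfl⟩
  · exact hc.minDegreeTwoOn_support
  set B := {x | x ∈ c1.support} ∪ {x | x ∈ c2.support} ∪ {x | x ∈ p.support}
  have h1 : ∀ x ∈ c1.support, (HexGraph.neighborSet x ∩ B).Nontrivial := fun x hx =>
    (hc1.minDegreeTwoOn_support x hx).mono (by intro y; simp +contextual [B])
  have h2 : ∀ x ∈ c2.support, (HexGraph.neighborSet x ∩ B).Nontrivial := fun x hx =>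
    (hc2.minDegreeTwoOn_support x hx).mono (by intro y; simp +contextual [B])
  rintro x ((hx | hx) | hx)
  · exact h1 x hx
  · exact h2 x hx
  by_cases hxw1 : x = w1
  · exact h1 x (hxw1 ▸ hw1)
  by_cases hxw2 : x = w2
  · exact h2 x (hxw2 ▸ hw2)
  exact (hp.nontrivial_neighborSet_inter_support hx hxw1 hxw2).mono
    (by intro y; simp +contextual [B])

theorem HexGraph.eq_nbrsT_of_adj {x y : Hex} (h : HexGraph.Adj x y) :
    y = (nbrsT x).1 ∨ y = (nbrsT x).2.1 ∨ y = (nbrsT x).2.2 := by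
  obtain ⟨i, j, b⟩ := x
  obtain ⟨k, l, c⟩ := y
  rw [HexGraph, SimpleGraph.fromRel_adj] at h
  obtain ⟨-, ⟨h1, h2, h3⟩ | ⟨h1, h2, h3⟩⟩ := h <;> simp_all [nbrsT, Prod.ext_iff]
  omega

theorem majAt_eq_of_adj {σ : Hex → Bool} {s : Bool} {x y z : Hex} (hyz : y ≠ z)
    (hy : HexGraph.Adj x y) (hz : HexGraph.Adj x z) (hys : σ y = s) (hzs : σ z = s) :
    majAt σ x = s := by
  rcases HexGraph.eq_nbrsT_of_adj hy with rfl | rfl | rfl <;>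
    rcases HexGraph.eq_nbrsT_of_adj hz with rfl | rfl | rfl <;>
    first
      | exact absurd rfl hyz
      | cases s <;> simp_all [majAt]

theorem evolve_succ_eq_of_nontrivial {σ0 : Hex → Bool} {n : ℕ} {s : Bool} {x : Hex}
    (hx : evolve σ0 n x = s)
    (hnbrs : (HexGraph.neighborSet x ∩ {y | evolve σ0 n y = s}).Nontrivial) :
    evolve σ0 (n + 1) x = s := by
  obtain ⟨y, ⟨hy, hys⟩, z, ⟨hz, hzs⟩, hyz⟩ := hnbrs
  have hmaj := majAt_eq_of_adj hyz hy hz hys hzs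
  have hA : updA (evolve σ0 n) x = s := by unfold updA; split_ifs <;> assumption
  have hB : updB (evolve σ0 n) x = s := by unfold updB; split_ifs <;> assumption
  rw [evolve]
  split_ifs <;> assumption

theorem evolve_eq_of_minDegreeTwoOn {σ0 : Hex → Bool} {S : Set Hex}
    (hS : HexGraph.MinDegreeTwoOn S) {s : Bool} {n0 : ℕ}
    (hconst : ∀ x ∈ S, evolve σ0 n0 x = s) :
    ∀ n, n0 ≤ n → ∀ x ∈ S, evolve σ0 n x = s := by
  intro n hn
  induction n, hn using Nat.le_induction with
  | base => exact hconst
  | succ n _ ih =>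
    exact fun x hx => evolve_succ_eq_of_nontrivial (ih x hx)
      ((hS x hx).mono (Set.inter_subset_inter_right _ ih))

/-- a constant-sign barbell is stable: every site of it keeps its sign at
all later times of the alternating dynamics. -/
theorem barbell_stable (σ0 : Hex → Bool) (S : Set Hex) (hS : IsBarbell S) (s : Bool)
    (n0 : ℕ) (hconst : ∀ x ∈ S, evolve σ0 n0 x = s) :
    ∀ n, n0 ≤ n → ∀ x ∈ S, evolve σ0 n x = s :=
  evolve_eq_of_minDegreeTwoOn hS.minDegreeTwoOn hconst
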